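/- Let n ≥ 1 be an integer and C ∈ M_n(𝔽₂). Then the dimension over 𝔽₂ of the linear subspace {Z ∈ M_n(𝔽₂) : Z + CZ + ZC = 0} of M_n(𝔽₂) is at most n²/2 (equivalently, twice this dimension is at most n²). -/

import Mathlib

/-!
Write `T_C Z = Z + C Z + Z C`. In characteristic `2`, `T_C ∘ T_C = T_{C²}`, so the kernel can only
grow when `C` is replaced by `C ^ 2 ^ k`; for suitable `k` this power `E` satisfies `E ^ 2 ^ d = E`,
so it is semisimple, hence diagonalizable over an algebraic closure, and extending scalars does not
shrink the kernel. For `E = diagonal a` the kernel lives on the positions `(i, j)` with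
`a j = a i + 1`. Writing `m μ` for the number of `i` with `a i = μ`, there are
`∑ m μ * m (μ + 1) ≤ ∑ m μ ^ 2` of them, the number of positions with `a j = a i`; the two sets of
positions are disjoint, so the first fills at most half of the `n²` positions.
-/

open Module LinearMap Finset Matrix

section Algebra

variable (R : Type*) {A : Type*} [CommRing R] [Ring A] [Algebra R A]

def idAddMulLeftAddMulRight (C : A) : A →ₗ[R] A :=
  LinearMap.id + mulLeft R C + mulRight R C

variable {R}

@[simp]
lemma idAddMulLeftAddMulRight_apply (C Z : A) :
    idAddMulLeftAddMulRight R C Z = Z + C * Z + Z * C :=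
  rfl

lemma map_idAddMulLeftAddMulRight {S B F : Type*} [CommRing S] [Ring B] [Algebra S B]
    [FunLike F A B] [RingHomClass F A B] (φ : F) (C Z : A) :
    φ (idAddMulLeftAddMulRight R C Z) = idAddMulLeftAddMulRight S (φ C) (φ Z) := by
  simp

lemma idAddMulLeftAddMulRight_mul_self [CharP R 2] (C : A) :
    idAddMulLeftAddMulRight R C * idAddMulLeftAddMulRight R C =
      idAddMulLeftAddMulRight R (C ^ 2) := by
  have two_zsmul_eq_zero (X : A) : (2 : ℤ) • X = 0 := by
    rw [← Int.cast_smul_eq_zsmul R, Int.cast_ofNat, CharTwo.two_eq_zero, zero_smul]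
  ext Z
  simp only [Module.End.mul_apply, idAddMulLeftAddMulRight_apply, pow_two, mul_add, add_mul,
    mul_assoc]
  abel_nf
  simp only [two_zsmul_eq_zero, zero_add]

lemma ker_idAddMulLeftAddMulRight_le_pow_two_pow [CharP R 2] (C : A) (k : ℕ) :
    ker (idAddMulLeftAddMulRight R C) ≤ ker (idAddMulLeftAddMulRight R (C ^ 2 ^ k)) := by
  induction k with
  | zero => simp
  | succ k ih =>
    rw [pow_succ, pow_mul, ← idAddMulLeftAddMulRight_mul_self, Module.End.mul_eq_comp]
    exact ih.trans (ker_le_ker_comp _ _)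

lemma finrank_ker_idAddMulLeftAddMulRight_algEquiv {B : Type*} [Ring B] [Algebra R B]
    (φ : A ≃ₐ[R] B) (C : A) :
    finrank R (ker (idAddMulLeftAddMulRight R (φ C))) =
      finrank R (ker (idAddMulLeftAddMulRight R C)) := by
  have : ker (idAddMulLeftAddMulRight R (φ C)) =
      (ker (idAddMulLeftAddMulRight R C)).map (φ.toLinearEquiv : A →ₗ[R] B) := by
    ext Z
    obtain ⟨Z, rfl⟩ := φ.surjective Z
    rw [Submodule.mem_map_equiv, mem_ker, mem_ker,
      ← map_idAddMulLeftAddMulRight (R := R) (S := R), map_eq_zero_iff _ φ.injective]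
    simp
  rw [this, LinearEquiv.finrank_map_eq]

end Algebra

lemma Finite.exists_pow_pow_pow_eq {M : Type*} [Monoid M] [Finite M] (x : M) (p : ℕ) :
    ∃ k d, 0 < d ∧ (x ^ p ^ k) ^ p ^ d = x ^ p ^ k := by
  obtain ⟨i, j, hne, heq⟩ := Finite.exists_ne_map_eq_of_infinite fun k : ℕ ↦ x ^ p ^ k
  wlog hij : i < j generalizing i j
  · exact this j i hne.symm heq.symm (hne.lt_or_gt.resolve_left hij)
  refine ⟨i, j - i, by omega, ?_⟩
  rw [← pow_mul, ← pow_add, Nat.add_sub_cancel' hij.le]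
  exact heq.symm

lemma Matrix.finrank_le_finrank_of_map_mem {F K m n : Type*} [Field F] [Field K] [Algebra F K]
    [Finite m] [Finite n] {W : Submodule F (Matrix m n F)} {W' : Submodule K (Matrix m n K)}
    (h : ∀ Z ∈ W, Z.map (algebraMap F K) ∈ W') : finrank F W ≤ finrank K W' := by
  let b := Module.finBasis F W
  let w (i : Fin (finrank F W)) : W' := ⟨(b i : Matrix m n F).map (algebraMap F K), h _ (b i).2⟩
  have hb : LinearIndependent F fun i (p : m × n) ↦ (b i : Matrix m n F) p.1 p.2 :=
    (b.linearIndependent.map' W.subtype W.ker_subtype).map'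
      (LinearEquiv.curry F F m n).symm.toLinearMap (LinearEquiv.ker _)
  have hw : LinearIndependent K w := by
    refine .of_comp ((LinearEquiv.curry K K m n).symm.toLinearMap ∘ₗ W'.subtype) ?_
    exact (linearIndependent_algebraMap_comp_iff (S := K)).mpr hb
  simpa using hw.fintype_card_le_finrank

lemma finrank_ker_idAddMulLeftAddMulRight_le_map {F K m : Type*} [Field F] [Field K]
    [Algebra F K] [Fintype m] [DecidableEq m] (C : Matrix m m F) :
    finrank F (ker (idAddMulLeftAddMulRight F C)) ≤
      finrank K (ker (idAddMulLeftAddMulRight K (C.map (algebraMap F K)))) :=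
  Matrix.finrank_le_finrank_of_map_mem fun Z hZ ↦ by
    rw [mem_ker, ← RingHom.mapMatrix_apply, ← RingHom.mapMatrix_apply,
      ← map_idAddMulLeftAddMulRight (R := F) (S := K), mem_ker.mp hZ, map_zero]

lemma Module.End.isSemisimple_of_pow_eq_self {K V : Type*} [Field K] [AddCommGroup V]
    [Module K V] (p : ℕ) [CharP K p] {q : ℕ} (hq : p ∣ q) {f : End K V} (hf : f ^ q = f) :
    f.IsSemisimple :=
  isSemisimple_of_squarefree_aeval_eq_zero (galois_poly_separable p q hq).squarefree
    (by simp [hf])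

lemma Matrix.exists_algEquiv_apply_eq_diagonal {K m : Type*} [Field K] [Fintype m]
    [DecidableEq m] {E : Matrix m m K} (hE : ⨆ μ, End.eigenspace (toLin' E) μ = ⊤) :
    ∃ (φ : Matrix m m K ≃ₐ[K] Matrix m m K) (a : m → K), φ E = diagonal a := by
  classical
  have hE' : DirectSum.IsInternal fun μ ↦ End.eigenspace (toLin' E) μ :=
    DirectSum.isInternal_submodule_of_iSupIndep_of_iSup_eq_top
      (End.eigenspaces_iSupIndep _) hE
  let B := hE'.collectedBasis fun μ ↦ finBasis K _
  let e := B.indexEquiv (Pi.basisFun K m)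
  let b := B.reindex e
  let a (i : m) : K := (e.symm i).1
  have hb (i : m) : E *ᵥ b i = a i • b i := by
    rw [B.reindex_apply]
    exact End.mem_eigenspace_iff.mp (hE'.collectedBasis_mem _ _)
  refine ⟨toMatrixAlgEquiv'.symm.trans (toMatrixAlgEquiv b), a, ?_⟩
  ext i j
  rcases eq_or_ne i j with rfl | hij
  · simp [toMatrixAlgEquiv_apply, hb]
  · simp [toMatrixAlgEquiv_apply, hb, hij]

lemma idAddMulLeftAddMulRight_diagonal_apply {R m : Type*} [CommRing R] [Fintype m]
    [DecidableEq m] (a : m → R) (Z : Matrix m m R) (i j : m) :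
    idAddMulLeftAddMulRight R (diagonal a) Z i j = (1 + a i + a j) * Z i j := by
  simp only [idAddMulLeftAddMulRight_apply, Matrix.add_apply, diagonal_mul, mul_diagonal]
  ring

lemma finrank_ker_idAddMulLeftAddMulRight_diagonal_le {K m : Type*} [Field K] [DecidableEq K]
    [Fintype m] [DecidableEq m] (a : m → K) :
    finrank K (ker (idAddMulLeftAddMulRight K (diagonal a))) ≤
      #{p : m × m | 1 + a p.1 + a p.2 = 0} := by
  set S : Finset (m × m) := {p | 1 + a p.1 + a p.2 = 0}
  let entries : ker (idAddMulLeftAddMulRight K (diagonal a)) →ₗ[K] S → K :=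
    LinearMap.pi fun p ↦ entryLinearMap K K p.1.1 p.1.2 ∘ₗ Submodule.subtype _
  have hentries : Function.Injective entries := by
    rw [← ker_eq_bot, ker_eq_bot']
    rintro ⟨Z, hZ⟩ hZS
    ext i j
    by_cases hij : (i, j) ∈ S
    · exact congr_fun hZS ⟨(i, j), hij⟩
    · have hZij : (1 + a i + a j) * Z i j = 0 := by
        rw [← idAddMulLeftAddMulRight_diagonal_apply, mem_ker.mp hZ, Matrix.zero_apply]
      exact (mul_eq_zero.mp hZij).resolve_left (by simpa [S] using hij)
  simpa using finrank_le_finrank_of_injective hentries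

section Counting

variable {m α : Type*} [Fintype m] [DecidableEq α]

lemma Finset.sum_mul_comp_le_sum_sq {s : Finset α} {M : α → ℕ} {g : α → α} (hg : g.Injective)
    (hM : ∀ μ ∉ s, M μ = 0) : ∑ μ ∈ s, M μ * M (g μ) ≤ ∑ μ ∈ s, M μ ^ 2 := by
  have hcomp : ∑ μ ∈ s, M (g μ) ^ 2 ≤ ∑ μ ∈ s, M μ ^ 2 := by
    rw [← sum_image (f := fun ν ↦ M ν ^ 2) hg.injOn]
    refine sum_le_sum_of_ne_zero fun ν _ hν ↦ ?_
    by_contra hνs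
    simp [hM ν hνs] at hν
  have amgm : 2 * ∑ μ ∈ s, M μ * M (g μ) ≤ ∑ μ ∈ s, M μ ^ 2 + ∑ μ ∈ s, M (g μ) ^ 2 := by
    rw [mul_sum, ← sum_add_distrib]
    exact sum_le_sum fun μ _ ↦ by nlinarith [two_mul_le_add_sq (M μ) (M (g μ))]
  omega

lemma card_filter_eq_comp_eq_sum_mul (a : m → α) (g : α → α) :
    #{p : m × m | a p.2 = g (a p.1)} =
      ∑ μ ∈ univ.image a, #{j | a j = μ} * #{j | a j = g μ} := by
  rw [card_filter, Fintype.sum_prod_type]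
  simp only [← card_filter]
  rw [sum_comp (fun μ ↦ #{j | a j = g μ}) a]
  rfl

lemma card_filter_eq_comp_le_card_filter_eq (a : m → α) {g : α → α} (hg : g.Injective) :
    #{p : m × m | a p.2 = g (a p.1)} ≤ #{p : m × m | a p.2 = a p.1} := by
  have hid := card_filter_eq_comp_eq_sum_mul a fun μ ↦ μ
  simp only [← sq] at hid
  rw [card_filter_eq_comp_eq_sum_mul a g, hid]
  refine sum_mul_comp_le_sum_sq hg fun μ hμ ↦ ?_
  simpa [filter_eq_empty_iff] using hμ

lemma two_mul_card_filter_eq_comp_le (a : m → α) {g : α → α} (hg : g.Injective)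
    (hfix : ∀ μ, g μ ≠ μ) : 2 * #{p : m × m | a p.2 = g (a p.1)} ≤ Fintype.card m ^ 2 := by
  classical
  have hdisj : Disjoint (univ.filter fun p : m × m ↦ a p.2 = g (a p.1))
      (univ.filter fun p : m × m ↦ a p.2 = a p.1) :=
    disjoint_filter.mpr fun p _ h h' ↦ hfix (a p.1) (h.symm.trans h')
  have hunion := card_le_univ ((univ.filter fun p : m × m ↦ a p.2 = g (a p.1)) ∪
    (univ.filter fun p : m × m ↦ a p.2 = a p.1))
  rw [card_union_of_disjoint hdisj, Fintype.card_prod] at hunion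
  have hle := card_filter_eq_comp_le_card_filter_eq a hg
  rw [sq]
  omega

end Counting

lemma two_mul_finrank_ker_idAddMulLeftAddMulRight_le_of_pow_eq_self {K m : Type*} [Field K]
    [IsAlgClosed K] [CharP K 2] [Fintype m] [DecidableEq m] {E : Matrix m m K} {q : ℕ}
    (hq : 2 ∣ q) (hE : E ^ q = E) :
    2 * finrank K (ker (idAddMulLeftAddMulRight K E)) ≤ Fintype.card m ^ 2 := by
  classical
  have hss : End.IsSemisimple (toLin' E) :=
    End.isSemisimple_of_pow_eq_self 2 hq (by rw [← toLin'_pow, hE])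
  obtain ⟨φ, a, hφ⟩ := exists_algEquiv_apply_eq_diagonal hss.iSup_eigenspace_eq_top
  have hfilter : #{p : m × m | 1 + a p.1 + a p.2 = 0} = #{p : m × m | a p.2 = a p.1 + 1} := by
    congr 1
    refine filter_congr fun p _ ↦ ?_
    rw [← sub_eq_zero (a := a p.2), CharTwo.sub_eq_add]
    ring_nf
  rw [← finrank_ker_idAddMulLeftAddMulRight_algEquiv φ, hφ]
  calc 2 * finrank K (ker (idAddMulLeftAddMulRight K (diagonal a)))
      ≤ 2 * #{p : m × m | 1 + a p.1 + a p.2 = 0} := by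
        gcongr; exact finrank_ker_idAddMulLeftAddMulRight_diagonal_le a
    _ ≤ Fintype.card m ^ 2 := by
        rw [hfilter]
        exact two_mul_card_filter_eq_comp_le a (add_left_injective 1) (by simp)

theorem finrank_ker_id_add_mulLeft_add_mulRight_le
    (n : ℕ) (C : Matrix (Fin n) (Fin n) (ZMod 2)) :
    2 * Module.finrank (ZMod 2)
      ↥(LinearMap.ker
        ((LinearMap.id : Matrix (Fin n) (Fin n) (ZMod 2) →ₗ[ZMod 2] Matrix (Fin n) (Fin n) (ZMod 2)) +
          LinearMap.mulLeft (ZMod 2) C + LinearMap.mulRight (ZMod 2) C)) ≤ n ^ 2 := by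
  change 2 * finrank (ZMod 2) (ker (idAddMulLeftAddMulRight (ZMod 2) C)) ≤ n ^ 2
  obtain ⟨k, d, hd, hE⟩ := Finite.exists_pow_pow_pow_eq C 2
  let K := AlgebraicClosure (ZMod 2)
  calc 2 * finrank (ZMod 2) (ker (idAddMulLeftAddMulRight (ZMod 2) C))
      ≤ 2 * finrank (ZMod 2) (ker (idAddMulLeftAddMulRight (ZMod 2) (C ^ 2 ^ k))) := by
        gcongr; exact Submodule.finrank_mono (ker_idAddMulLeftAddMulRight_le_pow_two_pow C k)
    _ ≤ 2 * finrank K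
          (ker (idAddMulLeftAddMulRight K ((C ^ 2 ^ k).map (algebraMap (ZMod 2) K)))) := by
        gcongr; exact finrank_ker_idAddMulLeftAddMulRight_le_map _
    _ ≤ Fintype.card (Fin n) ^ 2 :=
        two_mul_finrank_ker_idAddMulLeftAddMulRight_le_of_pow_eq_self (dvd_pow_self 2 hd.ne')
          (by rw [← Matrix.map_pow, hE])
    _ = n ^ 2 := by rw [Fintype.card_fin]
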